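/- arXiv:1108.4069 — 7 statements merged into one kernel-verified Lean document; each statement's English description precedes it below -/
import Mathlib

section
/- Let λ < 0 and let W be a standard one-dimensional Brownian motion with W(0) = 0, and let ζ be a real-valued random variable. Define the stopping time τ := inf{t ≥ 0 : ζ + λt + W(t) ≤ 0} and set X(t) := ζ + λt + W(t ∧ τ). Then X satisfies X(t) = ζ + λt + ∫₀ᵗ 1_{X(s)>0} dW(s) for all t ≥ 0, almost surely; i.e., X is a strong solution of dX(t) = λ dt + 1_{X(t)>0} dW(t) with X(0) = ζ. -/
open MeasureTheory ProbabilityTheory Set Filter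

/-- Standard one-dimensional Brownian motion adapted to the filtration `ℱ`. -/
structure IsStdBrownian {Ω : Type*} [m : MeasurableSpace Ω] (P : Measure Ω)
    (ℱ : Filtration ℝ m) (W : ℝ → Ω → ℝ) : Prop where
  adapted : Adapted ℱ W
  init : ∀ᵐ ω ∂P, W 0 ω = 0
  cont : ∀ᵐ ω ∂P, Continuous fun t => W t ω
  gauss : ∀ s t : ℝ, 0 ≤ s → ∀ h : s ≤ t,
    Measure.map (fun ω => W t ω - W s ω) P = gaussianReal 0 ⟨t - s, sub_nonneg.2 h⟩
  indep : ∀ (n : ℕ) (t : Fin (n + 1) → ℝ), Monotone t → 0 ≤ t 0 →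
    iIndepFun
      (fun i : Fin n => fun ω => W (t i.succ) ω - W (t i.castSucc) ω) P

/-- `M` is (a version of) the Itô integral `t ↦ ∫₀ᵗ 1_{Y(s)>0} dB(s)`. -/
structure IsIndIntegral {Ω : Type*} [m : MeasurableSpace Ω] (P : Measure Ω)
    (ℱ : Filtration ℝ m) (B : ℝ → Ω → ℝ) (Y : ℝ → Ω → ℝ) (M : ℝ → Ω → ℝ) : Prop where
  init : ∀ᵐ ω ∂P, M 0 ω = 0
  cont : ∀ᵐ ω ∂P, Continuous fun t => M t ω
  adapted : Adapted ℱ M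
  mart : Martingale M ℱ P
  flat : ∀ᵐ ω ∂P, ∀ s t : ℝ, 0 ≤ s → s ≤ t →
    (∀ u ∈ Icc s t, Y u ω ≤ 0) → M t ω = M s ω
  agrees : ∀ᵐ ω ∂P, ∀ s t : ℝ, 0 ≤ s → s ≤ t →
    (∀ u ∈ Icc s t, 0 < Y u ω) → M t ω - M s ω = B t ω - B s ω

/-- A weak solution of `dY = λ dt + 1_{Y>0} dB`, with `M` the stochastic-integral part. -/
structure WeakSolution {Ω : Type*} [m : MeasurableSpace Ω] (P : Measure Ω)
    (ℱ : Filtration ℝ m) (lam : ℝ) (B : ℝ → Ω → ℝ) (ξ : Ω → ℝ)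
    (Y : ℝ → Ω → ℝ) (M : ℝ → Ω → ℝ) : Prop where
  bm : IsStdBrownian P ℱ B
  contY : ∀ᵐ ω ∂P, Continuous fun t => Y t ω
  adaptedY : Adapted ℱ Y
  integral : IsIndIntegral P ℱ B Y M
  init : ∀ᵐ ω ∂P, Y 0 ω = ξ ω
  eqn : ∀ᵐ ω ∂P, ∀ t : ℝ, 0 ≤ t → Y t ω = ξ ω + lam * t + M t ω

/-! The argument is pathwise. Since `λ < 0`, the law `N(λn, n)` of `λn + W(n)` puts mass tending
to `1` below any fixed level, so almost surely `t ↦ ζ + λt + W(t)` reaches `0` and `τ` is a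
minimum with `ζ + λτ + W(τ) ≤ 0`. Before `τ` the process `X` is positive, so the integral moves
like `W`; by continuity this persists up to `τ`. After `τ`, `X(t) = X(τ) + λ(t - τ) ≤ 0`, so the
integral stays at `W(τ)`. Hence the integral equals `W(t ∧ τ)`. -/

open scoped NNReal Topology

section Pathwise

variable {f : ℝ → ℝ}

lemma sInf_nonpos_mem (hf : Continuous f) (hne : ∃ t, 0 ≤ t ∧ f t ≤ 0) :
    sInf {t | 0 ≤ t ∧ f t ≤ 0} ∈ {t | 0 ≤ t ∧ f t ≤ 0} :=
  ((isClosed_le continuous_const continuous_id).inter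
    (isClosed_le hf continuous_const)).csInf_mem hne ⟨0, fun _ ht => ht.1⟩

lemma pos_of_lt_sInf_nonpos {t : ℝ} (ht : 0 ≤ t) (hlt : t < sInf {t | 0 ≤ t ∧ f t ≤ 0}) :
    0 < f t := by
  by_contra! h
  exact notMem_of_lt_csInf hlt ⟨0, fun _ hs => hs.1⟩ ⟨ht, h⟩

lemma eq_stopped_of_flat_of_agrees {lam z τ : ℝ} {w μ : ℝ → ℝ} (hlam : lam ≤ 0)
    (hw : Continuous w) (hw0 : w 0 = 0) (hμ : Continuous μ) (hμ0 : μ 0 = 0)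
    (hτ : τ = sInf {t | 0 ≤ t ∧ z + lam * t + w t ≤ 0})
    (hne : ∃ t, 0 ≤ t ∧ z + lam * t + w t ≤ 0)
    (flat : ∀ s t, 0 ≤ s → s ≤ t → (∀ u ∈ Icc s t, z + lam * u + w (min u τ) ≤ 0) → μ t = μ s)
    (agrees : ∀ s t, 0 ≤ s → s ≤ t → (∀ u ∈ Icc s t, 0 < z + lam * u + w (min u τ)) →
      μ t - μ s = w t - w s)
    {t : ℝ} (ht : 0 ≤ t) : μ t = w (min t τ) := by
  have hfc : Continuous fun t => z + lam * t + w t := by fun_prop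
  obtain ⟨hτ0, hτneg⟩ : 0 ≤ τ ∧ z + lam * τ + w τ ≤ 0 := hτ ▸ sInf_nonpos_mem hfc hne
  have hbefore : EqOn μ w (Ico 0 τ) := fun t ⟨ht, htτ⟩ => by
    have := agrees 0 t le_rfl ht fun u ⟨hu, hut⟩ => by
      rw [min_eq_left (hut.trans htτ.le)]
      exact pos_of_lt_sInf_nonpos (f := fun t => z + lam * t + w t) hu (hτ ▸ hut.trans_lt htτ)
    linarith
  have hat : μ τ = w τ := by
    rcases hτ0.eq_or_lt with h | h
    · rw [← h, hμ0, hw0]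
    · exact hbefore.closure hμ hw (by rw [closure_Ico h.ne]; exact right_mem_Icc.2 hτ0)
  have hafter : ∀ t, τ ≤ t → μ t = μ τ := fun t hτt =>
    flat τ t hτ0 hτt fun u ⟨hτu, _⟩ => by
      rw [min_eq_right hτu]
      nlinarith
  rcases le_total t τ with h | h
  · rw [min_eq_left h]
    rcases h.lt_or_eq with h | rfl
    exacts [hbefore ⟨ht, h⟩, hat]
  · rw [min_eq_right h, hafter t h, hat]

end Pathwise

lemma gaussianReal_Iic_eq {v : ℝ≥0} (hv : v ≠ 0) (x : ℝ) :
    gaussianReal 0 v (Iic x) = gaussianReal 0 1 (Iic (x / √v)) := by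
  have hsv : 0 < √(v : ℝ) := Real.sqrt_pos.2 (NNReal.coe_pos.2 (pos_iff_ne_zero.2 hv))
  have hmap : (gaussianReal 0 1).map (√(v : ℝ) * ·) = gaussianReal 0 v := by
    rw [gaussianReal_map_const_mul, mul_zero, mul_one]
    congr
    exact Real.sq_sqrt v.2
  rw [← hmap, Measure.map_apply (measurable_const_mul _) measurableSet_Iic]
  congr 1
  ext y
  simp [le_div_iff₀ hsv, mul_comm]

lemma tendsto_gaussianReal_Iic_affine (a : ℝ) {b : ℝ} (hb : 0 < b) :
    Tendsto (fun t : ℝ => gaussianReal 0 t.toNNReal (Iic (a + b * t))) atTop (𝓝 1) := by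
  have hscaled : Tendsto (fun t => (a + b * t) / √t) atTop atTop := by
    refine (((tendsto_const_nhds (x := a)).div_atTop Real.tendsto_sqrt_atTop).add_atTop
      (Real.tendsto_sqrt_atTop.const_mul_atTop hb)).congr' ?_
    filter_upwards [eventually_ge_atTop 0] with t ht
    rw [add_div, mul_div_assoc, Real.div_sqrt]
  have hcdf : Tendsto (fun x => gaussianReal 0 1 (Iic x)) atTop (𝓝 1) := by
    simpa using tendsto_measure_Iic_atTop (gaussianReal 0 1)
  refine (hcdf.comp hscaled).congr' ?_
  filter_upwards [eventually_gt_atTop 0] with t ht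
  rw [Function.comp_apply, gaussianReal_Iic_eq (v := t.toNNReal) (by simpa using ht),
    Real.coe_toNNReal _ ht.le]

lemma ae_exists_mem_of_tendsto_measure_one {Ω : Type*} [MeasurableSpace Ω] {P : Measure Ω}
    [IsProbabilityMeasure P] {A : ℕ → Set Ω} (hA : ∀ n, MeasurableSet (A n))
    (h : Tendsto (fun n => P (A n)) atTop (𝓝 1)) : ∀ᵐ ω ∂P, ∃ n, ω ∈ A n := by
  simp_rw [← mem_iUnion]
  refine (ae_iff_measure_eq (p := (· ∈ ⋃ n, A n))
    (MeasurableSet.iUnion hA).nullMeasurableSet).2 ?_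
  rw [ofPred_mem_eq, measure_univ]
  exact le_antisymm prob_le_one
    (le_of_tendsto' h fun n => measure_mono (subset_iUnion A n))

namespace IsStdBrownian

variable {Ω : Type*} [m : MeasurableSpace Ω] {P : Measure Ω} {ℱ : Filtration ℝ m}
  {W : ℝ → Ω → ℝ}

lemma measurable (hW : IsStdBrownian P ℱ W) (t : ℝ) : Measurable (W t) :=
  (hW.adapted t).mono (ℱ.le t) le_rfl

lemma map_eq_gaussianReal (hW : IsStdBrownian P ℱ W) {t : ℝ} (ht : 0 ≤ t) :
    P.map (W t) = gaussianReal 0 t.toNNReal := by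
  have hinc : P.map (fun ω => W t ω - W 0 ω) = P.map (W t) :=
    Measure.map_congr (by filter_upwards [hW.init] with ω h0 using by rw [h0, sub_zero])
  rw [← hinc, hW.gauss 0 t le_rfl ht]
  congr
  rw [sub_zero, max_eq_left ht]

lemma ae_exists_drift_le [IsProbabilityMeasure P] (hW : IsStdBrownian P ℱ W) {lam : ℝ}
    (hlam : lam < 0) (c : ℝ) : ∀ᵐ ω ∂P, ∃ n : ℕ, c + lam * n + W n ω ≤ 0 := by
  have hA : ∀ n : ℕ, MeasurableSet (W n ⁻¹' Iic (-c + -lam * n)) :=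
    fun n => hW.measurable n measurableSet_Iic
  have hP : ∀ n : ℕ, P (W n ⁻¹' Iic (-c + -lam * n))
      = gaussianReal 0 (n : ℝ).toNNReal (Iic (-c + -lam * n)) := fun n => by
    rw [← hW.map_eq_gaussianReal n.cast_nonneg,
      Measure.map_apply (hW.measurable n) measurableSet_Iic]
  have hlim := (tendsto_gaussianReal_Iic_affine (-c) (neg_pos.2 hlam)).comp
    tendsto_natCast_atTop_atTop
  simp only [Function.comp_def, ← hP] at hlim
  filter_upwards [ae_exists_mem_of_tendsto_measure_one hA hlim] with ω ⟨n, hn⟩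
  exact ⟨n, by rw [mem_preimage, mem_Iic] at hn; linarith⟩

lemma ae_forall_exists_drift_le [IsProbabilityMeasure P] (hW : IsStdBrownian P ℱ W)
    {lam : ℝ} (hlam : lam < 0) : ∀ᵐ ω ∂P, ∀ c : ℝ, ∃ t, 0 ≤ t ∧ c + lam * t + W t ω ≤ 0 := by
  filter_upwards [ae_all_iff.2 fun k : ℕ => hW.ae_exists_drift_le hlam k] with ω hω c
  obtain ⟨n, hn⟩ := hω ⌈c⌉₊
  exact ⟨n, n.cast_nonneg, by linarith [Nat.le_ceil c]⟩

end IsStdBrownian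

theorem stmt0_general {Ω : Type*} [m : MeasurableSpace Ω] (P : Measure Ω) [IsProbabilityMeasure P]
    (ℱ : Filtration ℝ m) (W : ℝ → Ω → ℝ) (ζ : Ω → ℝ)
    (lam : ℝ) (hlam : lam < 0) (hW : IsStdBrownian P ℱ W)
    (τ : Ω → ℝ) (hτ : ∀ ω, τ ω = sInf {t : ℝ | 0 ≤ t ∧ ζ ω + lam * t + W t ω ≤ 0})
    (X : ℝ → Ω → ℝ) (hX : ∀ t ω, X t ω = ζ ω + lam * t + W (min t (τ ω)) ω)
    (M : ℝ → Ω → ℝ) (hM : IsIndIntegral P ℱ W X M) :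
    ∀ᵐ ω ∂P, ∀ t : ℝ, 0 ≤ t → X t ω = ζ ω + lam * t + M t ω := by
  filter_upwards [hW.init, hW.cont, hM.init, hM.cont, hM.flat, hM.agrees,
    hW.ae_forall_exists_drift_le hlam] with ω hW0 hWc hM0 hMc hflat hagrees hhit t ht
  simp only [hX] at hflat hagrees ⊢
  rw [eq_stopped_of_flat_of_agrees hlam.le hWc hW0 hMc hM0 (hτ ω) (hhit (ζ ω)) hflat hagrees ht]

/-- for λ < 0, the stopped process `X(t) = ζ + λt + W(t ∧ τ)`, with
`τ = inf{t ≥ 0 : ζ + λt + W(t) ≤ 0}`, satisfies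
`X(t) = ζ + λt + ∫₀ᵗ 1_{X(s)>0} dW(s)` for all `t ≥ 0`, almost surely. -/
theorem stmt0 {Ω : Type*} [m : MeasurableSpace Ω] (P : Measure Ω) [IsProbabilityMeasure P]
    (ℱ : Filtration ℝ m) (W : ℝ → Ω → ℝ) (ζ : Ω → ℝ) (hζ : Measurable ζ)
    (hζ0 : StronglyMeasurable[ℱ 0] ζ)
    (lam : ℝ) (hlam : lam < 0) (hW : IsStdBrownian P ℱ W)
    (τ : Ω → ℝ) (hτ : ∀ ω, τ ω = sInf {t : ℝ | 0 ≤ t ∧ ζ ω + lam * t + W t ω ≤ 0})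
    (X : ℝ → Ω → ℝ) (hX : ∀ t ω, X t ω = ζ ω + lam * t + W (min t (τ ω)) ω)
    (M : ℝ → Ω → ℝ) (hM : IsIndIntegral P ℱ W X M) :
    ∀ᵐ ω ∂P, ∀ t : ℝ, 0 ≤ t → X t ω = ζ ω + lam * t + M t ω :=
  stmt0_general (m := m) P ℱ W ζ lam hlam hW τ hτ X hX M hM
end

section
/- Let λ < 0 and suppose (Y, B, ξ) is a weak solution of Y(t) = ξ + λt + ∫₀ᵗ 1_{Y(s)>0} dB(s) on some filtered probability space, with B a standard Brownian motion. For ε > 0 define σ_{-ε} := inf{t ≥ 0 : Y(t) ≤ -ε} and ϱ_{-ε} := inf{t ≥ σ_{-ε} : Y(t) ≥ 0}. Then P(ϱ_{-ε} < ∞) = 0 for every ε > 0; i.e., once the solution reaches level -ε it never returns to 0. -/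
open MeasureTheory ProbabilityTheory Set Filter

/-!
While `Y ≤ 0` the integrand `1_{Y>0}` vanishes, so the stochastic integral is constant and `Y`
moves only by the drift `λ t`, which is nonincreasing. Hence a path that is negative at time `s`
cannot reach `0` later: at its first zero `u ≥ s` it would satisfy `0 = Y u ≤ Y s < 0`.
This argument is pathwise, so the event has probability zero.
-/

theorem exists_eq_zero_forall_nonpos_of_neg_of_nonneg {f : ℝ → ℝ} {s t : ℝ} (hst : s ≤ t)
    (hf : ContinuousOn f (Icc s t)) (hs : f s < 0) (ht : 0 ≤ f t) :
    ∃ u ∈ Icc s t, f u = 0 ∧ ∀ r ∈ Icc s u, f r ≤ 0 := by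
  set S := Icc s t ∩ f ⁻¹' {0}
  have hSne : S.Nonempty := intermediate_value_Icc hst hf ⟨hs.le, ht⟩
  have hSbdd : BddBelow S := ⟨s, fun x hx => hx.1.1⟩
  have hu : sInf S ∈ S :=
    (hf.preimage_isClosed_of_isClosed isClosed_Icc isClosed_singleton).csInf_mem hSne hSbdd
  refine ⟨sInf S, hu.1, hu.2, fun r hr => not_lt.1 fun hpos => ?_⟩
  obtain ⟨z, hz, hfz⟩ := intermediate_value_Icc hr.1
    (hf.mono (Icc_subset_Icc_right (hr.2.trans hu.1.2))) ⟨hs.le, hpos.le⟩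
  have hzS : z ∈ S := ⟨⟨hz.1, hz.2.trans (hr.2.trans hu.1.2)⟩, hfz⟩
  have hr_eq : r = sInf S := le_antisymm hr.2 ((csInf_le hSbdd hzS).trans hz.2)
  exact hpos.ne' (hr_eq ▸ hu.2)

theorem neg_of_le_while_nonpos {f : ℝ → ℝ} {s t : ℝ} (hst : s ≤ t)
    (hf : ContinuousOn f (Icc s t))
    (hle : ∀ u ∈ Icc s t, (∀ r ∈ Icc s u, f r ≤ 0) → f u ≤ f s) (hs : f s < 0) :
    f t < 0 := by
  by_contra! ht
  obtain ⟨u, hu, hfu, hnonpos⟩ := exists_eq_zero_forall_nonpos_of_neg_of_nonneg hst hf hs ht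
  linarith [hle u hu hnonpos]

theorem WeakSolution.ae_neg_of_neg {Ω : Type*} [m : MeasurableSpace Ω] {P : Measure Ω}
    {ℱ : Filtration ℝ m} {lam : ℝ} {B : ℝ → Ω → ℝ} {ξ : Ω → ℝ} {Y M : ℝ → Ω → ℝ}
    (hsol : WeakSolution P ℱ lam B ξ Y M) (hlam : lam ≤ 0) :
    ∀ᵐ ω ∂P, ∀ s t : ℝ, 0 ≤ s → s ≤ t → Y s ω < 0 → Y t ω < 0 := by
  filter_upwards [hsol.contY, hsol.integral.flat, hsol.eqn] with ω hcont hflat heqn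
  intro s t hs hst hYs
  refine neg_of_le_while_nonpos hst hcont.continuousOn (fun u hu hnonpos => ?_) hYs
  have hsu : s ≤ u := hu.1
  have hdrift : lam * u ≤ lam * s := mul_le_mul_of_nonpos_left hsu hlam
  rw [heqn u (hs.trans hsu), heqn s hs, hflat s u hs hsu hnonpos]
  linarith

theorem stmt1_general {Ω : Type*} [m : MeasurableSpace Ω] (P : Measure Ω)
    (ℱ : Filtration ℝ m) (lam : ℝ) (hlam : lam < 0)
    (B : ℝ → Ω → ℝ) (ξ : Ω → ℝ) (Y : ℝ → Ω → ℝ) (M : ℝ → Ω → ℝ)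
    (hsol : WeakSolution P ℱ lam B ξ Y M) :
    ∀ ε : ℝ, 0 < ε →
      P {ω | ∃ s t : ℝ, 0 ≤ s ∧ s ≤ t ∧ Y s ω ≤ -ε ∧ 0 ≤ Y t ω} = 0 := by
  intro ε hε
  refine measure_eq_zero_iff_ae_notMem.2 ?_
  filter_upwards [hsol.ae_neg_of_neg hlam.le] with ω hneg
  rintro ⟨s, t, hs, hst, hYs, hYt⟩
  exact (hneg s t hs hst (by linarith)).not_ge hYt

/-- for λ < 0, a weak solution of `Y = ξ + λt + ∫ 1_{Y>0} dB` that ever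
reaches level `-ε` (ε > 0) never returns to `0`: the event that there exist times
`s ≤ t` with `Y(s) ≤ -ε` and `Y(t) ≥ 0` (i.e. `ϱ_{-ε} < ∞`) has probability zero. -/
theorem stmt1 {Ω : Type*} [m : MeasurableSpace Ω] (P : Measure Ω) [IsProbabilityMeasure P]
    (ℱ : Filtration ℝ m) (lam : ℝ) (hlam : lam < 0)
    (B : ℝ → Ω → ℝ) (ξ : Ω → ℝ) (Y : ℝ → Ω → ℝ) (M : ℝ → Ω → ℝ)
    (hsol : WeakSolution P ℱ lam B ξ Y M) :
    ∀ ε : ℝ, 0 < ε →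
      P {ω | ∃ s t : ℝ, 0 ≤ s ∧ s ≤ t ∧ Y s ω ≤ -ε ∧ 0 ≤ Y t ω} = 0 :=
  stmt1_general (m := m) P ℱ lam hlam B ξ Y M hsol
end

section
/- Let λ < 0, let Y solve Y(t) = ξ + λt + ∫₀ᵗ 1_{Y(s)>0} dB(s), set σ := inf{t ≥ 0 : Y(t) ≤ 0}, M(t) := ∫₀ᵗ 1_{Y(s)>0} dB(s), and A_δ := {s ∈ [σ, σ+δ] : Y(s) > 0} for δ > 0. Then for each δ > 0 the event E_δ := { M(σ+t) − M(σ) ≥ −λt for all t ∈ [0, δ] } satisfies P(E_δ ∩ {Leb(A_δ) > 0}) = 0. -/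
/-!
On `E_δ` the martingale `M` grows at least linearly, at rate `-λ > 0`, on `[σ, σ + δ]`, and a
continuous martingale does this after a bounded stopping time `ρ` only on a null set. Indeed, let
`T` be the first time after `ρ` at which `M` falls `η` below `M ρ`, capped at `ρ + δ`. Optional
sampling gives `E[M T - M ρ] = 0`, while `M T - M ρ ≥ -η` everywhere and `M T - M ρ ≥ -λ δ` on
the event; by Markov's inequality the event has probability at most `η / (-λ δ)`, for every
`η > 0`. So `E_δ` is itself null.

To apply this to `σ`, which may be unbounded, write it on a co-null set as one of the hitting times
of `{Y ≤ 0}` capped at `K ∈ ℕ`. These are stopping times once the filtration is augmented by the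
null sets and `Y`, `M` are modified on a null set to have continuous paths. Optional sampling at
bounded stopping times of a continuous martingale follows from the countable-range case, by
rounding up to dyadic times and using the uniform integrability of conditional expectations.
-/

open MeasureTheory ProbabilityTheory Set Filter

open Topology Metric

namespace MeasureTheory

lemma continuous_indicator_apply {Ω ι β : Type*} [TopologicalSpace ι] [TopologicalSpace β]
    [Zero β] {X : ι → Ω → β} {G : Set Ω} (hX : ∀ ω ∈ G, Continuous fun t => X t ω) (ω : Ω) :
    Continuous fun t => G.indicator (X t) ω := by
  by_cases hω : ω ∈ G
  · simpa [hω] using hX ω hω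
  · simpa [hω] using continuous_const

section Augmentation

variable {Ω ι : Type*} {m : MeasurableSpace Ω} [Preorder ι] {μ : Measure Ω} {ℱ : Filtration ι m}

def Filtration.augment (μ : Measure Ω) (ℱ : Filtration ι m) : Filtration ι m where
  seq i :=
    { MeasurableSet' := fun A => MeasurableSet A ∧ ∃ B, MeasurableSet[ℱ i] B ∧ A =ᵐ[μ] B
      measurableSet_empty := ⟨.empty, ∅, @MeasurableSet.empty _ (ℱ i), .rfl⟩
      measurableSet_compl := fun _ ⟨hA, B, hB, hAB⟩ => ⟨hA.compl, Bᶜ, hB.compl, hAB.compl⟩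
      measurableSet_iUnion := fun A hA => by
        choose hA B hB hAB using hA
        exact ⟨.iUnion hA, ⋃ k, B k, .iUnion hB, Filter.EventuallyEq.countable_iUnion hAB⟩ }
  mono' _ _ hij _ := fun ⟨hA, B, hB, hAB⟩ => ⟨hA, B, ℱ.mono hij _ hB, hAB⟩
  le' _ _ hA := hA.1

namespace Filtration

lemma le_augment (i : ι) : ℱ i ≤ ℱ.augment μ i :=
  fun A hA => ⟨ℱ.le i A hA, A, hA, .rfl⟩

lemma measurableSet_augment_of_mem_ae {G : Set Ω} (hG : MeasurableSet G) (hGae : G ∈ ae μ)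
    (i : ι) : MeasurableSet[ℱ.augment μ i] G :=
  ⟨hG, univ, .univ, ae_eq_univ.2 (mem_ae_iff.1 hGae)⟩

end Filtration

open Filtration

lemma Martingale.augment [IsFiniteMeasure μ] {M : ι → Ω → ℝ} (hM : Martingale M ℱ μ) :
    Martingale M (ℱ.augment μ) μ := by
  refine ⟨fun i => (hM.stronglyAdapted i).mono (le_augment i), fun i j hij => ?_⟩
  refine (ae_eq_condExp_of_forall_setIntegral_eq ((ℱ.augment μ).le i) (hM.integrable j)
    (fun _ _ _ => (hM.integrable i).integrableOn) (fun A hA _ => ?_)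
    ((hM.stronglyAdapted i).mono (le_augment i)).aestronglyMeasurable).symm
  obtain ⟨B, hB, hAB⟩ := hA.2
  rw [setIntegral_congr_set hAB, setIntegral_congr_set hAB, hM.setIntegral_eq hij hB]

lemma Martingale.indicator_augment [IsFiniteMeasure μ] {M : ι → Ω → ℝ} (hM : Martingale M ℱ μ)
    {G : Set Ω} (hG : MeasurableSet G) (hGae : G ∈ ae μ) :
    Martingale (fun i => G.indicator (M i)) (ℱ.augment μ) μ :=
  hM.augment.congr
    (fun i => ((hM.stronglyAdapted i).mono (le_augment i)).indicator
      (measurableSet_augment_of_mem_ae hG hGae i))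
    (fun i => by filter_upwards [hGae] with ω hω using (indicator_of_mem hω _).symm)

lemma Adapted.indicator_augment {β : Type*} [MeasurableSpace β] [Zero β] {u : ι → Ω → β}
    (hu : Adapted ℱ u) {G : Set Ω} (hG : MeasurableSet G) (hGae : G ∈ ae μ) :
    Adapted (ℱ.augment μ) (fun i => G.indicator (u i)) :=
  fun i => ((hu i).mono (le_augment i) le_rfl).indicator
    (measurableSet_augment_of_mem_ae hG hGae i)

end Augmentation

section Hitting

variable {Ω β : Type*} {u : ℝ → Ω → β} {s : Set β} {n m : ℝ} {ω : Ω}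

lemma hittingBtwn_mem_of_continuous [TopologicalSpace β] (hs : IsClosed s)
    (hu : Continuous fun t => u t ω) (h : ∃ j ∈ Icc n m, u j ω ∈ s) :
    u (hittingBtwn u s n m ω) ω ∈ s := by
  simp only [hittingBtwn, if_pos h]
  obtain ⟨j, hj⟩ := h
  exact (isCompact_Icc.inter_right (hs.preimage hu)).sInf_mem ⟨j, hj⟩ |>.2

lemma hittingBtwn_le_iff_of_continuous [TopologicalSpace β] (hs : IsClosed s)
    (hu : Continuous fun t => u t ω) {i : ℝ} (hi : i < m) :
    hittingBtwn u s n m ω ≤ i ↔ ∃ j ∈ Icc n i, u j ω ∈ s := by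
  refine ⟨fun h => ?_, fun ⟨j, hj, hjs⟩ =>
    (hittingBtwn_le_of_mem hj.1 (hj.2.trans hi.le) hjs).trans hj.2⟩
  have h_exists : ∃ j ∈ Icc n m, u j ω ∈ s := by
    by_contra h_none
    rw [hittingBtwn, if_neg h_none] at h
    exact hi.not_ge h
  exact ⟨_, ⟨le_hittingBtwn_of_exists h_exists, h⟩, hittingBtwn_mem_of_continuous hs hu h_exists⟩

lemma apply_mem_closure_compl_of_le_hittingBtwn [TopologicalSpace β]
    (hu : Continuous fun t => u t ω) (hn : u n ω ∉ s) {t : ℝ} (hnt : n ≤ t)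
    (ht : t ≤ hittingBtwn u s n m ω) : u t ω ∈ closure sᶜ := by
  rcases hnt.eq_or_lt with rfl | hnt
  · exact subset_closure hn
  refine mem_closure_of_tendsto (hu.tendsto t |>.mono_left nhdsWithin_le_nhds)
    (mem_of_superset (Ioo_mem_nhdsLT hnt) fun j hj => ?_)
  exact notMem_of_lt_hittingBtwn (hj.2.trans_le ht) hj.1.le

lemma exists_hittingBtwn_eq_sInf [TopologicalSpace β] (hs : IsClosed s)
    (hu : Continuous fun t => u t ω) :
    ∃ K : ℕ, hittingBtwn u s 0 K ω = sInf {t | 0 ≤ t ∧ u t ω ∈ s} := by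
  set S := {t | 0 ≤ t ∧ u t ω ∈ s}
  rcases S.eq_empty_or_nonempty with hS | hS
  · refine ⟨0, ?_⟩
    rw [hS, Real.sInf_empty, hittingBtwn, if_neg]
    · simp
    rintro ⟨j, hj, hjs⟩
    exact hS.subset ⟨hj.1, hjs⟩
  have hmem : sInf S ∈ S :=
    (isClosed_Ici.inter (hs.preimage hu)).csInf_mem hS ⟨0, fun _ ht => ht.1⟩
  refine ⟨⌈sInf S⌉₊, ?_⟩
  have hK : sInf S ∈ Icc (0 : ℝ) ⌈sInf S⌉₊ := ⟨hmem.1, Nat.le_ceil _⟩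
  rw [hittingBtwn, if_pos ⟨_, hK, hmem.2⟩]
  exact le_antisymm (csInf_le ⟨0, fun _ ht => ht.1.1⟩ ⟨hK, hmem.2⟩)
    (le_csInf ⟨_, hK, hmem.2⟩ fun t ht => csInf_le ⟨0, fun _ ht => ht.1⟩ ⟨ht.1.1, ht.2⟩)

/-- The clamp `q ↦ max n (min c q)` maps the rationals onto a dense subset of `[n, c]`. -/
lemma exists_mem_Icc_mem_iff_forall_rat [PseudoMetricSpace β] {g : ℝ → β} (hg : Continuous g)
    (hs : IsClosed s) (hs_ne : s.Nonempty) {c : ℝ} (hnc : n ≤ c) :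
    (∃ j ∈ Icc n c, g j ∈ s) ↔
      ∀ k : ℕ, ∃ q : ℚ, infDist (g (max n (min c q))) s < ((k : ℝ) + 1)⁻¹ := by
  set h : ℝ → ℝ := fun x => infDist (g (max n (min c x))) s
  have hh : Continuous h := (continuous_infDist_pt s).comp
    (hg.comp (continuous_const.max (continuous_const.min continuous_id)))
  have hclamp : ∀ x ∈ Icc n c, max n (min c x) = x := fun x hx => by
    rw [min_eq_right hx.2, max_eq_right hx.1]
  have hclamp_mem : ∀ x, max n (min c x) ∈ Icc n c := fun x =>
    ⟨le_max_left _ _, max_le hnc (min_le_left _ _)⟩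
  constructor
  · rintro ⟨j, hj, hjs⟩ k
    have hj0 : h j < ((k : ℝ) + 1)⁻¹ := by
      simp only [h, hclamp j hj, (hs.mem_iff_infDist_zero hs_ne).1 hjs]
      positivity
    obtain ⟨q, hq⟩ := Rat.denseRange_cast.exists_mem_open (isOpen_lt hh continuous_const) ⟨j, hj0⟩
    exact ⟨q, hq⟩
  · intro hq
    by_contra! hnone
    obtain ⟨x, hx, hmin⟩ := isCompact_Icc.exists_isMinOn (nonempty_Icc.2 hnc) hh.continuousOn
    have hpos : 0 < h x := by
      simp only [h, hclamp x hx]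
      exact (infDist_nonneg.lt_of_ne' fun h0 =>
        hnone x hx ((hs.mem_iff_infDist_zero hs_ne).2 h0))
    obtain ⟨k, hk⟩ := exists_nat_one_div_lt hpos
    obtain ⟨q, hq⟩ := hq k
    have hqx : h x ≤ h q := by simpa [h, hclamp _ (hclamp_mem q)] using hmin (hclamp_mem q)
    rw [one_div] at hk
    exact (hqx.trans hq.le).not_gt hk

theorem Adapted.isStoppingTime_hittingBtwn_of_continuous [PseudoMetricSpace β] [MeasurableSpace β]
    [OpensMeasurableSpace β] {mΩ : MeasurableSpace Ω} {f : Filtration ℝ mΩ} (hu : Adapted f u)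
    (hcont : ∀ ω, Continuous fun t => u t ω) (hs : IsClosed s) (n m : ℝ) :
    IsStoppingTime f fun ω => ((hittingBtwn u s n m ω : ℝ) : WithTop ℝ) := by
  rcases s.eq_empty_or_nonempty with rfl | hs_ne
  · simpa [hittingBtwn_empty] using isStoppingTime_const f m
  intro c
  simp only [WithTop.coe_le_coe]
  rcases le_or_gt m c with hmc | hcm
  · have h_le : ∀ ω, hittingBtwn u s n m ω ≤ c := fun ω => (hittingBtwn_le ω).trans hmc
    simp [h_le]
  rcases lt_or_ge c n with hcn | hnc
  · convert @MeasurableSet.empty Ω (f c)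
    ext ω
    simp only [mem_ofPred_eq, mem_empty_iff_false, iff_false,
      hittingBtwn_le_iff_of_continuous hs (hcont ω) hcm]
    rintro ⟨j, hj, -⟩
    exact (hj.1.trans hj.2).not_gt hcn
  have h_eq : {ω | hittingBtwn u s n m ω ≤ c} =
      ⋂ k : ℕ, ⋃ q : ℚ, {ω | infDist (u (max n (min c q)) ω) s < ((k : ℝ) + 1)⁻¹} := by
    ext ω
    simp only [mem_ofPred_eq, mem_iInter, mem_iUnion,
      hittingBtwn_le_iff_of_continuous hs (hcont ω) hcm,
      exists_mem_Icc_mem_iff_forall_rat (hcont ω) hs hs_ne hnc]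
  rw [h_eq]
  refine .iInter fun k => .iUnion fun q => measurableSet_lt ?_ measurable_const
  exact (continuous_infDist_pt s).measurable.comp
    (hu.measurable_le (max_le hnc (min_le_left _ _)))

end Hitting

section OptionalStopping

noncomputable def dyadicCeil (n : ℕ) (x : ℝ) : ℝ := ⌈x * 2 ^ n⌉ / 2 ^ n

lemma le_dyadicCeil (n : ℕ) (x : ℝ) : x ≤ dyadicCeil n x := by
  rw [dyadicCeil, le_div_iff₀ (by positivity)]
  exact Int.le_ceil _

lemma dyadicCeil_lt (n : ℕ) (x : ℝ) : dyadicCeil n x < x + (2 ^ n)⁻¹ := by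
  rw [dyadicCeil, div_lt_iff₀ (by positivity), add_mul, inv_mul_cancel₀ (by positivity)]
  exact Int.ceil_lt_add_one _

lemma dyadicCeil_le_iff (n : ℕ) (x c : ℝ) :
    dyadicCeil n x ≤ c ↔ x ≤ ⌊c * 2 ^ n⌋ / 2 ^ n := by
  rw [dyadicCeil, div_le_iff₀ (by positivity), le_div_iff₀ (by positivity), ← Int.le_floor,
    Int.ceil_le]

lemma tendsto_dyadicCeil (x : ℝ) : Tendsto (fun n => dyadicCeil n x) atTop (𝓝 x) := by
  have h : Tendsto (fun n : ℕ => x + ((2 : ℝ) ^ n)⁻¹) atTop (𝓝 x) := by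
    simpa using tendsto_const_nhds.add
      (tendsto_inv_atTop_zero.comp (tendsto_pow_atTop_atTop_of_one_lt (one_lt_two (α := ℝ))))
  exact tendsto_of_tendsto_of_tendsto_of_le_of_le tendsto_const_nhds h
    (le_dyadicCeil · x) (fun n => (dyadicCeil_lt n x).le)

lemma countable_range_dyadicCeil (n : ℕ) : (range (dyadicCeil n)).Countable :=
  (countable_range fun k : ℤ => (k : ℝ) / 2 ^ n).mono
    (range_subset_iff.2 fun x => mem_range.2 ⟨⌈x * 2 ^ n⌉, rfl⟩)

variable {Ω : Type*} {m : MeasurableSpace Ω} {f : Filtration ℝ m}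

lemma IsStoppingTime.dyadicCeil {τ : Ω → ℝ} (hτ : IsStoppingTime f fun ω => (τ ω : WithTop ℝ))
    (n : ℕ) : IsStoppingTime f fun ω => ((dyadicCeil n (τ ω) : ℝ) : WithTop ℝ) := by
  intro c
  simp only [WithTop.coe_le_coe, dyadicCeil_le_iff]
  refine f.mono ?_ _ (by simpa using hτ (⌊c * 2 ^ n⌋ / 2 ^ n : ℝ))
  rw [div_le_iff₀ (by positivity)]
  exact Int.floor_le _

variable {μ : Measure Ω} [IsFiniteMeasure μ] {M : ℝ → Ω → ℝ} {τ : Ω → ℝ} {C : ℝ}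

/-- The values of `M` at the dyadic upper approximations of `τ` are conditional expectations of
`M (C + 1)`, by optional sampling for stopping times with countable range. -/
lemma Martingale.exists_uniformIntegrable_tendsto_apply_stoppingTime (hM : Martingale M f μ)
    (hcont : ∀ ω, Continuous fun t => M t ω) (hτ : IsStoppingTime f fun ω => (τ ω : WithTop ℝ))
    (hτC : ∀ ω, τ ω ≤ C) :
    ∃ g : ℕ → Ω → ℝ, UniformIntegrable g 1 μ ∧ (∀ n, ∫ ω, g n ω ∂μ = ∫ ω, M C ω ∂μ) ∧
      ∀ᵐ ω ∂μ, Tendsto (fun n => g n ω) atTop (𝓝 (M (τ ω) ω)) := by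
  have hτn_le : ∀ n ω, ((dyadicCeil n (τ ω) : ℝ) : WithTop ℝ) ≤ ((C + 1 : ℝ) : WithTop ℝ) :=
    fun n ω => WithTop.coe_le_coe.2 <| (dyadicCeil_lt n _).le.trans <|
      add_le_add (hτC ω) (inv_le_one_of_one_le₀ (one_le_pow₀ one_le_two))
  have hle n := (hτ.dyadicCeil n).measurableSpace_le_of_le (hτn_le n)
  have hg : ∀ n, (fun ω => M (dyadicCeil n (τ ω)) ω) =ᵐ[μ]
      μ[M (C + 1) | (hτ.dyadicCeil n).measurableSpace] := fun n =>
    hM.stoppedValue_ae_eq_condExp_of_le_const_of_countable_range (hτ.dyadicCeil n) (hτn_le n)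
      (((countable_range_dyadicCeil n).image _).mono
        (by rintro _ ⟨ω, rfl⟩; exact ⟨_, ⟨τ ω, rfl⟩, rfl⟩))
  refine ⟨fun n => μ[M (C + 1) | (hτ.dyadicCeil n).measurableSpace],
    (hM.integrable (C + 1)).uniformIntegrable_condExp hle, fun n => ?_, ?_⟩
  · rw [integral_condExp (hle n)]
    simpa using (hM.setIntegral_eq (le_add_of_nonneg_right zero_le_one) MeasurableSet.univ).symm
  · filter_upwards [ae_all_iff.2 hg] with ω hω
    exact (((hcont ω).tendsto _).comp (tendsto_dyadicCeil _)).congr hω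

theorem Martingale.integrable_apply_stoppingTime_of_continuous (hM : Martingale M f μ)
    (hcont : ∀ ω, Continuous fun t => M t ω) (hτ : IsStoppingTime f fun ω => (τ ω : WithTop ℝ))
    (hτC : ∀ ω, τ ω ≤ C) :
    Integrable (fun ω => M (τ ω) ω) μ :=
  let ⟨_, hUI, _, hg⟩ := hM.exists_uniformIntegrable_tendsto_apply_stoppingTime hcont hτ hτC
  hUI.integrable_of_ae_tendsto hg

theorem Martingale.integral_apply_stoppingTime_of_continuous (hM : Martingale M f μ)
    (hcont : ∀ ω, Continuous fun t => M t ω) (hτ : IsStoppingTime f fun ω => (τ ω : WithTop ℝ))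
    (hτC : ∀ ω, τ ω ≤ C) :
    ∫ ω, M (τ ω) ω ∂μ = ∫ ω, M C ω ∂μ := by
  obtain ⟨g, hUI, hg_int, hg⟩ :=
    hM.exists_uniformIntegrable_tendsto_apply_stoppingTime hcont hτ hτC
  have hMτ := hUI.memLp_of_ae_tendsto hg
  have h_lim := tendsto_integral_of_L1' _ hMτ.1
    (Eventually.of_forall fun n => (hUI.memLp n).integrable le_rfl)
    (tendsto_Lp_finite_of_tendsto_ae le_rfl ENNReal.one_ne_top hUI.1 hMτ hUI.2.1 hg)
  exact tendsto_nhds_unique (h_lim.congr hg_int) tendsto_const_nhds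

end OptionalStopping

section LinearGrowth

variable {Ω : Type*} {m : MeasurableSpace Ω} {μ : Measure Ω}

lemma measure_le_le_div_of_integral_eq_zero [IsProbabilityMeasure μ] {X : Ω → ℝ}
    (hX : Integrable X μ) (hX0 : ∫ ω, X ω ∂μ = 0) {η a : ℝ} (hη : 0 ≤ η)
    (hXη : ∀ ω, -η ≤ X ω) (ha : 0 < a) :
    μ {ω | a ≤ X ω} ≤ ENNReal.ofReal (η / a) := by
  have h_markov := mul_meas_ge_le_integral_of_nonneg (f := fun ω => X ω + η)
    (Eventually.of_forall fun ω => by simpa using neg_le_iff_add_nonneg.1 (hXη ω))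
    (hX.add (integrable_const η)) a
  rw [integral_add hX (integrable_const η), hX0, integral_const, probReal_univ, one_smul,
    zero_add] at h_markov
  rw [ENNReal.le_ofReal_iff_toReal_le (measure_ne_top μ _) (by positivity), le_div_iff₀ ha,
    mul_comm, ← measureReal_def]
  exact (mul_le_mul_of_nonneg_left (measureReal_mono fun ω (hω : a ≤ X ω) =>
    show a ≤ X ω + η by linarith) ha.le).trans h_markov

variable {f : Filtration ℝ m} {M : ℝ → Ω → ℝ} {ρ : Ω → ℝ} {K δ : ℝ}

/-- `T` is the hitting time of `Iic (-η)` by `M - M^ρ`, which vanishes up to time `ρ`, capped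
at `ρ + δ`. -/
lemma StronglyAdapted.exists_isStoppingTime_drawdown (hM : StronglyAdapted f M)
    (hcont : ∀ ω, Continuous fun t => M t ω) (hρ : IsStoppingTime f fun ω => (ρ ω : WithTop ℝ))
    (hρ0 : ∀ ω, 0 ≤ ρ ω) (hρK : ∀ ω, ρ ω ≤ K) (hδ : 0 ≤ δ) {η : ℝ} (hη : 0 < η) :
    ∃ T : Ω → ℝ, (IsStoppingTime f fun ω => (T ω : WithTop ℝ)) ∧ (∀ ω, T ω ≤ ρ ω + δ) ∧
      (∀ ω, -η ≤ M (T ω) ω - M (ρ ω) ω) ∧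
      ∀ ω, (∀ t ∈ Icc 0 δ, 0 ≤ M (ρ ω + t) ω - M (ρ ω) ω) → T ω = ρ ω + δ := by
  set Z : ℝ → Ω → ℝ := M - MeasureTheory.stoppedProcess M fun ω => (ρ ω : WithTop ℝ)
  have hZ : ∀ t ω, Z t ω = M t ω - M (min t (ρ ω)) ω := fun t ω => by
    show M t ω - M (min (t : WithTop ℝ) (ρ ω)).untopA ω = _
    rw [← WithTop.coe_min]
    rfl
  have hZ_cont : ∀ ω, Continuous fun t => Z t ω := fun ω => by
    simp only [hZ]
    exact (hcont ω).sub ((hcont ω).comp (continuous_id.min continuous_const))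
  have hZ_eq_zero : ∀ ω, ∀ t ≤ ρ ω, Z t ω = 0 := fun ω t ht => by simp [hZ, min_eq_left ht]
  set H := hittingBtwn Z (Iic (-η)) 0 (K + δ)
  have hH_not_lt : ∀ ω {t}, t ≤ K + δ → (∀ j ∈ Ico 0 t, -η < Z j ω) → ¬ H ω < t :=
    fun ω t htK hZt hlt => by
      obtain ⟨j, hj, hZj⟩ := (hittingBtwn_lt_iff t htK).1 hlt
      exact (hZt j hj).not_ge hZj
  have hρH : ∀ ω, ρ ω ≤ H ω := fun ω => not_lt.1 <| hH_not_lt ω (by linarith [hρK ω])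
    fun j hj => by rw [hZ_eq_zero ω j hj.2.le]; linarith
  have hρT : ∀ ω, ρ ω ≤ min (H ω) (ρ ω + δ) := fun ω => le_min (hρH ω) (by linarith)
  refine ⟨fun ω => min (H ω) (ρ ω + δ), ?_, fun ω => min_le_right _ _, fun ω => ?_,
    fun ω hω => ?_⟩
  · simpa [WithTop.coe_min] using
      ((hM.sub (hM.stoppedProcess hcont hρ)).adapted.isStoppingTime_hittingBtwn_of_continuous
        hZ_cont isClosed_Iic 0 (K + δ)).min (hρ.add_const hδ)
  · have h := apply_mem_closure_compl_of_le_hittingBtwn (hZ_cont ω)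
      (by simp [hZ_eq_zero ω 0 (hρ0 ω), hη] : Z 0 ω ∉ Iic (-η))
      ((hρ0 ω).trans (hρT ω)) (min_le_left _ _)
    rwa [compl_Iic, closure_Ioi, mem_Ici, hZ, min_eq_right (hρT ω)] at h
  · refine min_eq_right <| not_lt.1 <| hH_not_lt ω (by linarith [hρK ω]) fun j hj => ?_
    rcases le_total j (ρ ω) with hjρ | hρj
    · rw [hZ_eq_zero ω j hjρ]
      linarith
    · have h := hω (j - ρ ω) ⟨by linarith, by linarith [hj.2]⟩
      rw [add_sub_cancel] at h
      rw [hZ, min_eq_right hρj]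
      linarith

variable [IsProbabilityMeasure μ]

theorem Martingale.measure_forall_mul_le_sub_eq_zero (hM : Martingale M f μ)
    (hcont : ∀ ω, Continuous fun t => M t ω) (hρ : IsStoppingTime f fun ω => (ρ ω : WithTop ℝ))
    (hρ0 : ∀ ω, 0 ≤ ρ ω) (hρK : ∀ ω, ρ ω ≤ K) {ε : ℝ} (hε : 0 < ε) (hδ : 0 < δ) :
    μ {ω | ∀ t ∈ Icc 0 δ, ε * t ≤ M (ρ ω + t) ω - M (ρ ω) ω} = 0 := by
  set E := {ω | ∀ t ∈ Icc 0 δ, ε * t ≤ M (ρ ω + t) ω - M (ρ ω) ω}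
  suffices h : ∀ η > 0, μ E ≤ ENNReal.ofReal (η / (ε * δ)) by
    refine le_antisymm (ENNReal.le_of_forall_pos_le_add fun x hx _ => ?_) bot_le
    simpa [mul_div_cancel_right₀ _ (mul_pos hε hδ).ne'] using h (x * (ε * δ)) (by positivity)
  intro η hη
  obtain ⟨T, hT, hT_le, hT_ge, hT_eq⟩ :=
    hM.stronglyAdapted.exists_isStoppingTime_drawdown hcont hρ hρ0 hρK hδ.le hη
  have hT_le' : ∀ ω, T ω ≤ K + δ := fun ω => (hT_le ω).trans (by linarith [hρK ω])
  have hρ_le : ∀ ω, ρ ω ≤ K + δ := fun ω => by linarith [hρK ω]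
  have hMT := hM.integrable_apply_stoppingTime_of_continuous hcont hT hT_le'
  have hMρ := hM.integrable_apply_stoppingTime_of_continuous hcont hρ hρ_le
  have h_mean : ∫ ω, M (T ω) ω - M (ρ ω) ω ∂μ = 0 := by
    rw [integral_sub hMT hMρ, hM.integral_apply_stoppingTime_of_continuous hcont hT hT_le',
      hM.integral_apply_stoppingTime_of_continuous hcont hρ hρ_le, sub_self]
  refine (measure_mono fun ω (hω : ω ∈ E) => ?_).trans
    (measure_le_le_div_of_integral_eq_zero (hMT.sub hMρ) h_mean hη.le hT_ge (mul_pos hε hδ))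
  show ε * δ ≤ M (T ω) ω - M (ρ ω) ω
  rw [hT_eq ω fun t ht => (mul_nonneg hε.le ht.1).trans (hω t ht)]
  exact hω δ ⟨hδ.le, le_rfl⟩

end LinearGrowth

end MeasureTheory

/-- for λ < 0 and a weak solution `Y`, with `σ = inf{t ≥ 0 : Y(t) ≤ 0}`,
`M(t) = ∫₀ᵗ 1_{Y(s)>0} dB(s)` and `A_δ = {s ∈ [σ, σ+δ] : Y(s) > 0}`, the event
`E_δ = {M(σ+t) - M(σ) ≥ -λt for all t ∈ [0,δ]}` satisfies
`P(E_δ ∩ {Leb(A_δ) > 0}) = 0`. -/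
theorem stmt3 {Ω : Type*} [m : MeasurableSpace Ω] (P : Measure Ω) [IsProbabilityMeasure P]
    (ℱ : Filtration ℝ m) (lam : ℝ) (hlam : lam < 0)
    (B : ℝ → Ω → ℝ) (ξ : Ω → ℝ) (Y : ℝ → Ω → ℝ) (M : ℝ → Ω → ℝ)
    (hsol : WeakSolution P ℱ lam B ξ Y M)
    (σ : Ω → ℝ) (hσ : ∀ ω, σ ω = sInf {t : ℝ | 0 ≤ t ∧ Y t ω ≤ 0})
    (δ : ℝ) (hδ : 0 < δ) :
    P ({ω | ∀ t ∈ Icc (0:ℝ) δ, -lam * t ≤ M (σ ω + t) ω - M (σ ω) ω} ∩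
        {ω | 0 < volume {s : ℝ | s ∈ Icc (σ ω) (σ ω + δ) ∧ 0 < Y s ω}}) = 0 := by
  obtain ⟨G, hGae, hG, hG_cont⟩ := (hsol.contY.and hsol.integral.cont).exists_measurable_mem
  have hM' := hsol.integral.mart.indicator_augment hG hGae
  have hM'_cont := continuous_indicator_apply fun ω hω => (hG_cont ω hω).2
  have hY'_cont := continuous_indicator_apply fun ω hω => (hG_cont ω hω).1
  -- hitting times of `{Y ≤ 0}` capped at `K : ℕ`; on `G`, `σ` coincides with one of them
  have hρ (K : ℕ) :=
    (hsol.adaptedY.indicator_augment hG hGae).isStoppingTime_hittingBtwn_of_continuous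
      hY'_cont (isClosed_Iic (a := 0)) 0 K
  have hnull (K : ℕ) := hM'.measure_forall_mul_le_sub_eq_zero hM'_cont (hρ K)
    (fun ω => le_hittingBtwn (Nat.cast_nonneg K) ω) (fun ω => hittingBtwn_le ω) (neg_pos.2 hlam) hδ
  refine measure_mono_null (fun ω hω => ?_)
    (measure_union_null (mem_ae_iff.1 hGae) (measure_iUnion_null hnull))
  by_cases hωG : ω ∈ G
  · obtain ⟨K, hK⟩ := exists_hittingBtwn_eq_sInf (isClosed_Iic (a := (0 : ℝ))) (hY'_cont ω)
    simp only [indicator_of_mem hωG, mem_Iic, ← hσ] at hK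
    refine Or.inr (mem_iUnion.2 ⟨K, fun t ht => ?_⟩)
    simpa only [indicator_of_mem hωG, hK] using hω.1 t ht
  · exact Or.inl hωG
end

section
/- Let λ > 0 and suppose (X, B) is a weak solution of dX(t) = λ·1_{X(t)≤0} dt + 1_{X(t)>0} dB(t) with X(0) ≥ 0 almost surely. Then almost surely X(t) ≥ 0 for all t ≥ 0. -/
open MeasureTheory ProbabilityTheory Set Filter

/-!
The argument is pathwise. If `X(t) < 0`, let `s` be the last time before `t` with `X(s) = 0`.
On `[s, t]` the path stays `≤ 0`, so the stochastic integral does not move there, while the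
occupation time of `(-∞, 0]` grows by exactly `t - s`. Hence `X(t) = X(s) + λ (t - s) ≥ 0`.
-/

lemma exists_zero_forall_Icc_nonpos {f : ℝ → ℝ} (hf : Continuous f) {a b : ℝ} (hab : a ≤ b)
    (ha : 0 ≤ f a) (hb : f b < 0) : ∃ c ∈ Icc a b, f c = 0 ∧ ∀ u ∈ Icc c b, f u ≤ 0 := by
  obtain ⟨c, ⟨⟨hac, hcb⟩, hfc⟩, hc_max⟩ :=
    (isCompact_Icc.inter_right (isClosed_le continuous_const hf)).exists_isGreatest
      ⟨a, ⟨le_rfl, hab⟩, ha⟩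
  have hcb' : c ≠ b := by rintro rfl; exact hfc.not_gt hb
  have hIoc : Ioc c b ⊆ {u | f u ≤ 0} := fun u ⟨hcu, hub⟩ =>
    show f u ≤ 0 from le_of_not_ge fun hfu => hcu.not_ge (hc_max ⟨⟨hac.trans hcu.le, hub⟩, hfu⟩)
  have hIcc : Icc c b ⊆ {u | f u ≤ 0} := by
    rw [← closure_Ioc hcb']
    exact (isClosed_le hf continuous_const).closure_subset_iff.2 hIoc
  exact ⟨c, ⟨hac, hcb⟩, le_antisymm (hIcc ⟨le_rfl, hcb⟩) hfc, hIcc⟩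

lemma toReal_volume_sep_Icc_eq_add {p : ℝ → Prop} {s t : ℝ} (hs : 0 ≤ s) (hst : s ≤ t)
    (hp : ∀ u ∈ Ioc s t, p u) :
    (volume {u ∈ Icc 0 t | p u}).toReal = (volume {u ∈ Icc 0 s | p u}).toReal + (t - s) := by
  have hsplit : {u ∈ Icc 0 t | p u} = {u ∈ Icc 0 s | p u} ∪ Ioc s t := by
    ext u
    constructor
    · rintro ⟨⟨h0u, hut⟩, hpu⟩
      rcases le_or_gt u s with hus | hsu
      · exact Or.inl ⟨⟨h0u, hus⟩, hpu⟩
      · exact Or.inr ⟨hsu, hut⟩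
    · rintro (⟨⟨h0u, hus⟩, hpu⟩ | hu)
      · exact ⟨⟨h0u, hus.trans hst⟩, hpu⟩
      · exact ⟨⟨hs.trans hu.1.le, hu.2⟩, hp u hu⟩
  have hdisj : Disjoint {u ∈ Icc 0 s | p u} (Ioc s t) :=
    disjoint_left.2 fun _ hu hu' => hu'.1.not_ge hu.1.2
  have hfin : volume {u ∈ Icc 0 s | p u} ≠ ⊤ :=
    ((measure_mono fun _ hu => hu.1).trans_lt measure_Icc_lt_top).ne
  rw [hsplit, measure_union hdisj measurableSet_Ioc, Real.volume_Ioc,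
    ENNReal.toReal_add hfin ENNReal.ofReal_ne_top, ENNReal.toReal_ofReal (sub_nonneg.2 hst)]

lemma nonneg_of_eq_add_occupation_add_flat {lam : ℝ} (hlam : 0 ≤ lam) {x m : ℝ → ℝ}
    (hx : Continuous x)
    (hm : ∀ s t : ℝ, 0 ≤ s → s ≤ t → (∀ u ∈ Icc s t, x u ≤ 0) → m t = m s)
    (heq : ∀ t : ℝ, 0 ≤ t →
      x t = x 0 + lam * (volume {s : ℝ | s ∈ Icc 0 t ∧ x s ≤ 0}).toReal + m t)
    (h0 : 0 ≤ x 0) {t : ℝ} (ht : 0 ≤ t) : 0 ≤ x t := by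
  by_contra! hneg
  obtain ⟨s, ⟨hs, hst⟩, hxs, hnonpos⟩ := exists_zero_forall_Icc_nonpos hx ht h0 hneg
  have hocc := toReal_volume_sep_Icc_eq_add (p := fun u => x u ≤ 0) hs hst
    fun u hu => hnonpos u (Ioc_subset_Icc_self hu)
  have hxt : x t = x s + lam * (t - s) := by
    rw [heq t ht, heq s hs, hocc, hm s t hs hst hnonpos]
    ring
  linarith [mul_nonneg hlam (sub_nonneg.2 hst)]

theorem stmt7_general {Ω : Type*} [m : MeasurableSpace Ω] (P : Measure Ω)
    (ℱ : Filtration ℝ m) (lam : ℝ) (hlam : 0 < lam)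
    (B X M : ℝ → Ω → ℝ)
    (hcont : ∀ᵐ ω ∂P, Continuous fun t => X t ω)
    (hM : IsIndIntegral P ℱ B X M)
    (heqn : ∀ᵐ ω ∂P, ∀ t : ℝ, 0 ≤ t →
      X t ω = X 0 ω + lam * (volume {s : ℝ | s ∈ Icc 0 t ∧ X s ω ≤ 0}).toReal + M t ω)
    (hinit : ∀ᵐ ω ∂P, 0 ≤ X 0 ω) :
    ∀ᵐ ω ∂P, ∀ t : ℝ, 0 ≤ t → 0 ≤ X t ω := by
  filter_upwards [hcont, hM.flat, heqn, hinit] with ω hx hflat heq h0 t ht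
  exact nonneg_of_eq_add_occupation_add_flat hlam.le hx hflat heq h0 ht

/-- for λ > 0, any weak solution of
`dX = λ 1_{X ≤ 0} dt + 1_{X > 0} dB` with `X(0) ≥ 0` a.s. stays nonnegative:
a.s. `X(t) ≥ 0` for all `t ≥ 0`. -/
theorem stmt7 {Ω : Type*} [m : MeasurableSpace Ω] (P : Measure Ω) [IsProbabilityMeasure P]
    (ℱ : Filtration ℝ m) (lam : ℝ) (hlam : 0 < lam)
    (B X M : ℝ → Ω → ℝ) (hB : IsStdBrownian P ℱ B)
    (hcont : ∀ᵐ ω ∂P, Continuous fun t => X t ω) (hadapted : Adapted ℱ X)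
    (hM : IsIndIntegral P ℱ B X M)
    (heqn : ∀ᵐ ω ∂P, ∀ t : ℝ, 0 ≤ t →
      X t ω = X 0 ω + lam * (volume {s : ℝ | s ∈ Icc 0 t ∧ X s ω ≤ 0}).toReal + M t ω)
    (hinit : ∀ᵐ ω ∂P, 0 ≤ X 0 ω) :
    ∀ᵐ ω ∂P, ∀ t : ℝ, 0 ≤ t → 0 ≤ X t ω :=
  stmt7_general (m := m) P ℱ lam hlam B X M hcont hM heqn hinit
end

section
/- Skorokhod map (deterministic lemma): for a continuous function w : [0, ∞) → ℝ with w(0) ≥ 0, the pair z(t) := w(t) + ℓ(t), ℓ(t) := max(0, max_{0≤s≤t} (−w(s))), is the unique pair such that z is continuous and nonnegative, ℓ is continuous, nondecreasing with ℓ(0) = 0, ℓ increases only at times t with z(t) = 0, and z = w + ℓ. -/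
/-!
The regulator `ℓ(t) = max(0, sup_{[0,t]} (-w))` is the smallest nondecreasing `ℓ ≥ 0` keeping
`w + ℓ` nonnegative, and it can only grow at a time `y` where `-w y` is a new running maximum,
i.e. where `w y + ℓ y = 0`. Conversely, if `ℓ'` solves the problem, on the last stretch of
`[0, t]` where `ℓ' > ℓ(t)` we have `z' > z ≥ 0`, so `ℓ'` is flat there and by continuity
`ℓ'(t) ≤ ℓ(t)`.
-/

open Set

noncomputable def skorokhodRegulator (w : ℝ → ℝ) (t : ℝ) : ℝ :=
  max 0 (sSup ((fun s => -w s) '' Icc 0 t))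

theorem skorokhodRegulator_nonneg (w : ℝ → ℝ) (t : ℝ) : 0 ≤ skorokhodRegulator w t :=
  le_max_left _ _

theorem le_of_flat_where_gt {f g : ℝ → ℝ} (hf : ContinuousOn f (Ici 0))
    (hg : MonotoneOn g (Ici 0)) (h0 : f 0 ≤ g 0)
    (hflat : ∀ s t, 0 ≤ s → s ≤ t → (∀ u ∈ Icc s t, g u < f u) → f t = f s)
    {t : ℝ} (ht : 0 ≤ t) : f t ≤ g t := by
  set S := {u ∈ Icc 0 t | f u ≤ g t}
  have hS : IsCompact S :=
    isCompact_Icc.of_isClosed_subset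
      ((hf.mono Icc_subset_Ici_self).preimage_isClosed_of_isClosed isClosed_Icc isClosed_Iic)
      (sep_subset _ _)
  obtain ⟨s₀, ⟨⟨hs₀, hs₀t⟩, hfs₀⟩, hs₀_max⟩ :=
    hS.exists_isGreatest ⟨0, ⟨le_rfl, ht⟩, h0.trans (hg self_mem_Ici ht ht)⟩
  rcases hs₀t.eq_or_lt with rfl | hs₀t
  · exact hfs₀
  have hgt : ∀ u ∈ Ioc s₀ t, g u < f u := fun u hu =>
    (hg (hs₀.trans hu.1.le) ht hu.2).trans_lt <|
      not_le.mp fun hle => hu.1.not_ge (hs₀_max ⟨⟨hs₀.trans hu.1.le, hu.2⟩, hle⟩)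
  have hconst : EqOn f (fun _ => f t) (Ioc s₀ t) := fun u hu =>
    (hflat u t (hs₀.trans hu.1.le) hu.2 fun v hv => hgt v ⟨hu.1.trans_le hv.1, hv.2⟩).symm
  have hcont : ContinuousOn f (Icc s₀ t) := hf.mono fun u hu => hs₀.trans hu.1
  have hfs₀_eq : f s₀ = f t :=
    hconst.of_subset_closure hcont continuousOn_const Ioc_subset_Icc_self
      (closure_Ioc hs₀t.ne).ge ⟨le_rfl, hs₀t.le⟩
  exact hfs₀_eq ▸ hfs₀

section SkorokhodRegulator

variable {w : ℝ → ℝ}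

theorem skorokhodRegulator_le_iff (hw : Continuous w) {t c : ℝ} (ht : 0 ≤ t) :
    skorokhodRegulator w t ≤ c ↔ 0 ≤ c ∧ ∀ s ∈ Icc 0 t, -w s ≤ c := by
  have hbdd : BddAbove ((fun s => -w s) '' Icc 0 t) := (isCompact_Icc.image hw.neg).bddAbove
  rw [skorokhodRegulator, max_le_iff, csSup_le_iff hbdd ((nonempty_Icc.mpr ht).image _),
    forall_mem_image]

theorem neg_le_skorokhodRegulator (hw : Continuous w) {s t : ℝ} (hs : 0 ≤ s) (hst : s ≤ t) :
    -w s ≤ skorokhodRegulator w t :=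
  (le_csSup (isCompact_Icc.image hw.neg).bddAbove ⟨s, ⟨hs, hst⟩, rfl⟩).trans (le_max_right _ _)

theorem skorokhodRegulator_zero (hw : Continuous w) (hw0 : 0 ≤ w 0) :
    skorokhodRegulator w 0 = 0 :=
  le_antisymm ((skorokhodRegulator_le_iff hw le_rfl).mpr
    ⟨le_rfl, fun s hs => by rw [le_antisymm hs.2 hs.1]; exact neg_nonpos.mpr hw0⟩)
    (skorokhodRegulator_nonneg w 0)

theorem monotoneOn_skorokhodRegulator (hw : Continuous w) :
    MonotoneOn (skorokhodRegulator w) (Ici 0) := fun _ hs t _ hst =>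
  (skorokhodRegulator_le_iff hw hs).mpr
    ⟨skorokhodRegulator_nonneg w t, fun _ hu => neg_le_skorokhodRegulator hw hu.1 (hu.2.trans hst)⟩

theorem continuousOn_skorokhodRegulator (hw : Continuous w) :
    ContinuousOn (skorokhodRegulator w) (Ici 0) := by
  have hrescale : ∀ t ∈ Ici (0 : ℝ),
      max 0 (sSup ((fun s => -w (t * s)) '' Icc 0 1)) = skorokhodRegulator w t := by
    intro t ht
    have hIcc : Icc 0 t = (t * ·) '' Icc 0 1 := by
      rw [image_mul_left_Icc (mem_Ici.mp ht) zero_le_one, mul_zero, mul_one]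
    rw [skorokhodRegulator, hIcc, image_image]
  refine ContinuousOn.congr ?_ fun t ht => (hrescale t ht).symm
  exact (continuous_const.max (isCompact_Icc.continuous_sSup
    (hw.comp continuous_mul).neg)).continuousOn

theorem exists_skorokhodRegulator_eq (hw : Continuous w) {t : ℝ} (ht : 0 ≤ t) :
    ∃ y ∈ Icc 0 t, skorokhodRegulator w t = max 0 (-w y) := by
  obtain ⟨y, hy, hmax⟩ :=
    isCompact_Icc.exists_isMaxOn (nonempty_Icc.mpr ht) hw.neg.continuousOn
  refine ⟨y, hy, le_antisymm ?_ ?_⟩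
  · exact (skorokhodRegulator_le_iff hw ht).mpr
      ⟨le_max_left _ _, fun s hs => (hmax hs).trans (le_max_right _ _)⟩
  · exact max_le (skorokhodRegulator_nonneg w t) (neg_le_skorokhodRegulator hw hy.1 hy.2)

theorem add_skorokhodRegulator_nonneg (hw : Continuous w) {t : ℝ} (ht : 0 ≤ t) :
    0 ≤ w t + skorokhodRegulator w t := by
  linarith [neg_le_skorokhodRegulator hw ht le_rfl]

theorem skorokhodRegulator_eq_of_forall_pos (hw : Continuous w) {s t : ℝ} (hs : 0 ≤ s)
    (hst : s ≤ t) (hpos : ∀ u ∈ Icc s t, 0 < w u + skorokhodRegulator w u) :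
    skorokhodRegulator w t = skorokhodRegulator w s := by
  refine le_antisymm ?_ (monotoneOn_skorokhodRegulator hw hs (hs.trans hst) hst)
  obtain ⟨y, hy, hRt⟩ := exists_skorokhodRegulator_eq hw (hs.trans hst)
  rw [hRt]
  rcases le_total y s with hys | hsy
  · exact max_le (skorokhodRegulator_nonneg w s) (neg_le_skorokhodRegulator hw hy.1 hys)
  -- `w y + ℓ y > 0` and `ℓ y ≤ ℓ t` rule out `ℓ t = -w y`
  have hwy : 0 < w y + max 0 (-w y) :=
    hRt ▸ (hpos y ⟨hsy, hy.2⟩).trans_le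
      (add_le_add le_rfl (monotoneOn_skorokhodRegulator hw hy.1 (hs.trans hst) hy.2))
  rcases le_total (-w y) 0 with hneg | hneg
  · exact (max_eq_left hneg).trans_le (skorokhodRegulator_nonneg w s)
  · rw [max_eq_right hneg] at hwy
    linarith

theorem skorokhodRegulator_le (hw : Continuous w) {ℓ : ℝ → ℝ} (hmono : MonotoneOn ℓ (Ici 0))
    (h0 : 0 ≤ ℓ 0) (hnn : ∀ t, 0 ≤ t → 0 ≤ w t + ℓ t) {t : ℝ} (ht : 0 ≤ t) :
    skorokhodRegulator w t ≤ ℓ t :=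
  (skorokhodRegulator_le_iff hw ht).mpr
    ⟨h0.trans (hmono self_mem_Ici ht ht), fun s hs => by
      linarith [hnn s hs.1, hmono hs.1 ht hs.2]⟩

theorem eq_skorokhodRegulator (hw : Continuous w) {ℓ : ℝ → ℝ} (hcont : ContinuousOn ℓ (Ici 0))
    (hmono : MonotoneOn ℓ (Ici 0)) (h0 : ℓ 0 = 0) (hnn : ∀ t, 0 ≤ t → 0 ≤ w t + ℓ t)
    (hflat : ∀ s t, 0 ≤ s → s ≤ t → (∀ u ∈ Icc s t, 0 < w u + ℓ u) → ℓ t = ℓ s)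
    {t : ℝ} (ht : 0 ≤ t) : ℓ t = skorokhodRegulator w t := by
  refine le_antisymm ?_ (skorokhodRegulator_le hw hmono h0.ge hnn ht)
  refine le_of_flat_where_gt hcont (monotoneOn_skorokhodRegulator hw)
    (h0.trans_le (skorokhodRegulator_nonneg w 0)) (fun s t hs hst hlt => hflat s t hs hst ?_) ht
  intro u hu
  linarith [hlt u hu, add_skorokhodRegulator_nonneg hw (hs.trans hu.1)]

end SkorokhodRegulator

/-- Skorokhod reflection problem: for continuous `w` with `w(0) ≥ 0`,
the pair `z(t) = w(t) + ℓ(t)`, `ℓ(t) = max(0, max_{0≤s≤t}(-w(s)))` is the unique pair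
with: `z` continuous and nonnegative on `[0,∞)`, `ℓ` continuous nondecreasing with
`ℓ(0) = 0` and increasing only at times where `z = 0`, and `z = w + ℓ`. -/
theorem stmt13 (w : ℝ → ℝ) (hw : Continuous w) (hw0 : 0 ≤ w 0)
    (ℓ z : ℝ → ℝ)
    (hℓ : ∀ t : ℝ, ℓ t = max 0 (⨆ s : Set.Icc (0:ℝ) t, -w (s : ℝ)))
    (hz : ∀ t : ℝ, z t = w t + ℓ t) :
    -- (z, ℓ) solves the Skorokhod problem
    (ContinuousOn z (Ici 0) ∧ (∀ t : ℝ, 0 ≤ t → 0 ≤ z t)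
      ∧ ContinuousOn ℓ (Ici 0) ∧ MonotoneOn ℓ (Ici 0) ∧ ℓ 0 = 0
      ∧ (∀ s t : ℝ, 0 ≤ s → s ≤ t → (∀ u ∈ Icc s t, 0 < z u) → ℓ t = ℓ s)
      ∧ (∀ t : ℝ, 0 ≤ t → z t = w t + ℓ t))
    -- and it is the unique such pair on [0, ∞)
    ∧ (∀ z' ℓ' : ℝ → ℝ,
        ContinuousOn z' (Ici 0) → (∀ t : ℝ, 0 ≤ t → 0 ≤ z' t) →
        ContinuousOn ℓ' (Ici 0) → MonotoneOn ℓ' (Ici 0) → ℓ' 0 = 0 →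
        (∀ s t : ℝ, 0 ≤ s → s ≤ t → (∀ u ∈ Icc s t, 0 < z' u) → ℓ' t = ℓ' s) →
        (∀ t : ℝ, 0 ≤ t → z' t = w t + ℓ' t) →
        ∀ t : ℝ, 0 ≤ t → z' t = z t ∧ ℓ' t = ℓ t) := by
  obtain rfl : ℓ = skorokhodRegulator w :=
    funext fun t => by rw [hℓ, skorokhodRegulator, sSup_image']
  obtain rfl : z = w + skorokhodRegulator w := funext hz
  refine ⟨⟨hw.continuousOn.add (continuousOn_skorokhodRegulator hw),
    fun t ht => add_skorokhodRegulator_nonneg hw ht, continuousOn_skorokhodRegulator hw,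
    monotoneOn_skorokhodRegulator hw, skorokhodRegulator_zero hw hw0,
    fun _ _ hs hst => skorokhodRegulator_eq_of_forall_pos hw hs hst,
    fun t _ => hz t⟩, ?_⟩
  intro z' ℓ' _ hz'nn hℓ'c hℓ'mono hℓ'0 hℓ'flat hz' t ht
  have hℓ' : ℓ' t = skorokhodRegulator w t :=
    eq_skorokhodRegulator hw hℓ'c hℓ'mono hℓ'0 (fun u hu => hz' u hu ▸ hz'nn u hu)
      (fun s u hs hsu hpos => hℓ'flat s u hs hsu fun v hv =>
        hz' v (hs.trans hv.1) ▸ hpos v hv) ht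
  exact ⟨by rw [hz' t ht, hℓ', Pi.add_apply], hℓ'⟩
end

section
/- Any weak solution (X, W) of dX(t) = 1_{X(t)≥0} dW(t) with X(0) = x ≥ 0 satisfies: P(X(t) < 0) = P(X(0) < 0) = 0 for every t ≥ 0, hence X(t) ≥ 0 for Lebesgue-a.e. t almost surely; consequently X has quadratic variation ⟨X⟩(t) = t and, by Lévy's characterization, X is a standard Brownian motion — a contradiction (since Brownian motion takes negative values with positive probability). Therefore the equation dX = 1_{X≥0} dW admits no weak solution from x ≥ 0. -/
open MeasureTheory ProbabilityTheory Set Filter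

/-- `M` is (a version of) the Itô integral `t ↦ ∫₀ᵗ 1_{Y(s) ≥ 0} dB(s)`. -/
structure IsIndIntegralGe {Ω : Type*} [m : MeasurableSpace Ω] (P : Measure Ω)
    (ℱ : Filtration ℝ m) (B : ℝ → Ω → ℝ) (Y : ℝ → Ω → ℝ) (M : ℝ → Ω → ℝ) : Prop where
  init : ∀ᵐ ω ∂P, M 0 ω = 0
  cont : ∀ᵐ ω ∂P, Continuous fun t => M t ω
  adapted : Adapted ℱ M
  mart : Martingale M ℱ P
  flat : ∀ᵐ ω ∂P, ∀ s t : ℝ, 0 ≤ s → s ≤ t →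
    (∀ u ∈ Icc s t, Y u ω < 0) → M t ω = M s ω
  agrees : ∀ᵐ ω ∂P, ∀ s t : ℝ, 0 ≤ s → s ≤ t →
    (∀ u ∈ Icc s t, 0 ≤ Y u ω) → M t ω - M s ω = B t ω - B s ω

/-!
A solution started at `x ≥ 0` can never become negative: after the last time `s₀ ≤ t` at which
`X ≥ 0`, the integrand vanishes, so `X` is constant on `(s₀, t]` and, by continuity, `X t = X s₀ ≥ 0`.
Hence the integrand is identically `1` and `X 1 = x + W 1 - W 0`, so the Gaussian increment
`W 1 - W 0` would be almost surely `≥ -x`, which it is not.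
-/

theorem nonneg_of_continuous_of_const_on_neg {X : ℝ → ℝ} (hc : Continuous X) (h0 : 0 ≤ X 0)
    (hconst : ∀ s t, 0 ≤ s → s ≤ t → (∀ u ∈ Icc s t, X u < 0) → X t = X s) {t : ℝ} (ht : 0 ≤ t) :
    0 ≤ X t := by
  by_contra! hneg
  set A := Icc 0 t ∩ X ⁻¹' Ici 0
  have hAbdd : BddAbove A := ⟨t, fun s hs => hs.1.2⟩
  have hs₀ : sSup A ∈ A :=
    (isClosed_Icc.inter (isClosed_Ici.preimage hc)).csSup_mem ⟨0, ⟨le_rfl, ht⟩, h0⟩ hAbdd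
  set s₀ := sSup A
  have hs₀t : s₀ ≠ t := fun h => (h ▸ hs₀.2 : 0 ≤ X t).not_gt hneg
  have hneg_after : ∀ u ∈ Ioc s₀ t, X u < 0 := fun u hu =>
    not_le.1 fun hXu => hu.1.not_ge (le_csSup hAbdd ⟨⟨hs₀.1.1.trans hu.1.le, hu.2⟩, hXu⟩)
  have hconst_after : EqOn X (fun _ => X t) (Ioc s₀ t) := fun s hs =>
    (hconst s t (hs₀.1.1.trans hs.1.le) hs.2
      fun u hu => hneg_after u ⟨hs.1.trans_le hu.1, hu.2⟩).symm
  have hXs₀ : X s₀ = X t :=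
    hconst_after.of_subset_closure hc.continuousOn continuousOn_const Ioc_subset_Icc_self
      (closure_Ioc hs₀t).ge ⟨le_rfl, hs₀.1.2⟩
  exact (hXs₀ ▸ hs₀.2 : 0 ≤ X t).not_gt hneg

theorem not_ae_le_of_map_eq_gaussianReal {Ω : Type*} [MeasurableSpace Ω] {P : Measure Ω}
    {f : Ω → ℝ} {μ : ℝ} {v : NNReal} (hv : v ≠ 0) (hf : P.map f = gaussianReal μ v) (c : ℝ) :
    ¬ ∀ᵐ ω ∂P, c ≤ f ω := by
  intro h
  have hf_meas : AEMeasurable f P :=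
    .of_map_ne_zero (hf ▸ (inferInstance : IsProbabilityMeasure (gaussianReal μ v)).ne_zero)
  have hgauss : ∀ᵐ y ∂gaussianReal μ v, c ≤ y :=
    hf ▸ (ae_map_iff hf_meas measurableSet_Ici).2 h
  have hvol := ae_iff.1 ((gaussianReal_absolutelyContinuous' μ hv).ae_le hgauss)
  simp only [not_le] at hvol
  exact ENNReal.top_ne_zero (Real.volume_Iio (a := c) ▸ hvol)

theorem IsStdBrownian.not_ae_le_sub {Ω : Type*} [m : MeasurableSpace Ω] {P : Measure Ω}
    {ℱ : Filtration ℝ m} {W : ℝ → Ω → ℝ} (hW : IsStdBrownian P ℱ W) {s t : ℝ} (hs : 0 ≤ s)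
    (hst : s < t) (c : ℝ) : ¬ ∀ᵐ ω ∂P, c ≤ W t ω - W s ω :=
  not_ae_le_of_map_eq_gaussianReal (v := ⟨t - s, (sub_pos.2 hst).le⟩)
    (fun h => (sub_pos.2 hst).ne' (congrArg NNReal.toReal h))
    (hW.gauss s t hs hst.le) c

theorem IsIndIntegralGe.ae_nonneg {Ω : Type*} [m : MeasurableSpace Ω] {P : Measure Ω}
    {ℱ : Filtration ℝ m} {W X M : ℝ → Ω → ℝ} {x : ℝ} (hx : 0 ≤ x)
    (hcont : ∀ᵐ ω ∂P, Continuous fun t => X t ω) (hM : IsIndIntegralGe P ℱ W X M)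
    (heqn : ∀ᵐ ω ∂P, ∀ t : ℝ, 0 ≤ t → X t ω = x + M t ω) :
    ∀ᵐ ω ∂P, ∀ t, 0 ≤ t → 0 ≤ X t ω := by
  filter_upwards [hcont, heqn, hM.flat, hM.init] with ω hc heq hflat hM0 t ht
  refine nonneg_of_continuous_of_const_on_neg hc ?_ (fun s t hs hst hneg => ?_) ht
  · simpa [heq 0 le_rfl, hM0] using hx
  · rw [heq t (hs.trans hst), heq s hs, hflat s t hs hst hneg]

theorem stmt16_general {Ω : Type*} [m : MeasurableSpace Ω] (P : Measure Ω)
    (ℱ : Filtration ℝ m) (W X M : ℝ → Ω → ℝ) (x : ℝ) (hx : 0 ≤ x)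
    (hW : IsStdBrownian P ℱ W)
    (hcont : ∀ᵐ ω ∂P, Continuous fun t => X t ω)
    (hM : IsIndIntegralGe P ℱ W X M)
    (heqn : ∀ᵐ ω ∂P, ∀ t : ℝ, 0 ≤ t → X t ω = x + M t ω) :
    False := by
  refine hW.not_ae_le_sub le_rfl zero_lt_one (-x) ?_
  filter_upwards [hM.ae_nonneg hx hcont heqn, heqn, hM.init, hM.agrees]
    with ω hpos heq hM0 hagrees
  have hincr : M 1 ω - M 0 ω = W 1 ω - W 0 ω :=
    hagrees 0 1 le_rfl zero_le_one fun u hu => hpos u hu.1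
  have hX1 := hpos 1 zero_le_one
  rw [heq 1 zero_le_one] at hX1
  linarith

/-- the equation `dX = 1_{X ≥ 0} dW` admits no weak solution started at
`x ≥ 0`: assuming one exists leads to a contradiction (any such solution would be
nonnegative for a.e. time, hence — by Lévy's characterization — a standard Brownian
motion, which takes negative values with positive probability). -/
theorem stmt16 {Ω : Type*} [m : MeasurableSpace Ω] (P : Measure Ω) [IsProbabilityMeasure P]
    (ℱ : Filtration ℝ m) (W X M : ℝ → Ω → ℝ) (x : ℝ) (hx : 0 ≤ x)
    (hW : IsStdBrownian P ℱ W)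
    (hcont : ∀ᵐ ω ∂P, Continuous fun t => X t ω) (hadapted : Adapted ℱ X)
    (hM : IsIndIntegralGe P ℱ W X M)
    (heqn : ∀ᵐ ω ∂P, ∀ t : ℝ, 0 ≤ t → X t ω = x + M t ω) :
    False :=
  stmt16_general (m := m) P ℱ W X M x hx hW hcont hM heqn
end

section
/- Let λ < 0 and suppose Y is a weak solution of Y(t) = ξ + λt + ∫₀ᵗ 1_{Y(s)>0} dB(s) with ξ > 0 a.s. Then almost surely, once Y hits level −ε (at time σ_{-ε} := inf{t : Y(t) ≤ −ε}, ε > 0), it moves deterministically: Y(σ_{-ε} ∨ t) = Y(σ_{-ε}) + λ((σ_{-ε} ∨ t) − σ_{-ε}) for all t ≥ 0, i.e., Y decreases linearly at rate λ after σ_{-ε}. -/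
open MeasureTheory ProbabilityTheory Set Filter

/-!
`M` is constant while `Y ≤ 0`, so once `Y` is negative it follows the line of slope `λ < 0`
and can never climb back to `0`. It remains to see that `Y` a.s. drops below `-ε`. Pathwise
`M ≥ -ξ`: at the last zero `c ≤ t` of `Y`, `M t = M c = -ξ - λ c`. On `{ξ ≤ K}` the martingale
`M n + K` is therefore nonnegative with mean `K · P{ξ ≤ K}`, while on the event that
`Y n ≥ -ε` for all `n` it is at least `-ε - λ n → ∞`; by Markov's inequality that event is null.
-/

section FirstLastHit

variable {α δ : Type*} [ConditionallyCompleteLinearOrder α] [TopologicalSpace α] [OrderTopology α]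
  [DenselyOrdered α] [LinearOrder δ] [TopologicalSpace δ] [OrderClosedTopology δ]
  {f : α → δ} {a b : α} {v : δ}

theorem intermediate_value_Icc_first (hab : a ≤ b) (hf : ContinuousOn f (Icc a b))
    (ha : f a ≤ v) (hb : v ≤ f b) :
    ∃ c ∈ Icc a b, f c = v ∧ ∀ u ∈ Icc a c, f u ≤ v := by
  have hZ : IsCompact (Icc a b ∩ f ⁻¹' {v}) :=
    isCompact_Icc.of_isClosed_subset
      (hf.preimage_isClosed_of_isClosed isClosed_Icc isClosed_singleton) inter_subset_left
  obtain ⟨w, hw, hfw⟩ := intermediate_value_Icc hab hf ⟨ha, hb⟩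
  obtain ⟨c, ⟨hc, hfc⟩, hleast⟩ := hZ.exists_isLeast ⟨w, hw, hfw⟩
  refine ⟨c, hc, hfc, fun u hu => le_of_not_gt fun hvu => ?_⟩
  obtain ⟨w, hw, hfw⟩ :=
    intermediate_value_Icc hu.1 (hf.mono (Icc_subset_Icc_right (hu.2.trans hc.2))) ⟨ha, hvu.le⟩
  have hwu : w = u :=
    le_antisymm hw.2 (hu.2.trans (hleast ⟨⟨hw.1, hw.2.trans (hu.2.trans hc.2)⟩, hfw⟩))
  exact hvu.ne (hwu ▸ hfw).symm

theorem intermediate_value_Icc'_last (hab : a ≤ b) (hf : ContinuousOn f (Icc a b))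
    (ha : v ≤ f a) (hb : f b ≤ v) :
    ∃ c ∈ Icc a b, f c = v ∧ ∀ u ∈ Icc c b, f u ≤ v := by
  have hf' :
      ContinuousOn (f ∘ OrderDual.ofDual) (Icc (OrderDual.toDual b) (OrderDual.toDual a)) := by
    rw [Icc_toDual]
    exact hf.comp continuous_ofDual.continuousOn (fun _ h => h)
  obtain ⟨c, hc, hfc, hle⟩ := intermediate_value_Icc_first (α := αᵒᵈ)
    (a := OrderDual.toDual b) (b := OrderDual.toDual a) hab hf' hb ha
  exact ⟨OrderDual.ofDual c, ⟨hc.2, hc.1⟩, hfc, fun u hu => hle (OrderDual.toDual u) ⟨hu.2, hu.1⟩⟩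

end FirstLastHit

structure IsPathwiseSolution (lam : ℝ) (y f : ℝ → ℝ) : Prop where
  cont : Continuous y
  eqn : ∀ t, 0 ≤ t → y t = y 0 + lam * t + f t
  flat : ∀ s t, 0 ≤ s → s ≤ t → (∀ u ∈ Icc s t, y u ≤ 0) → f t = f s

namespace IsPathwiseSolution

variable {lam : ℝ} {y f : ℝ → ℝ} {s t : ℝ}

theorem eq_add_mul_of_nonpos_on (hp : IsPathwiseSolution lam y f) (hs : 0 ≤ s) (hst : s ≤ t)
    (hneg : ∀ u ∈ Icc s t, y u ≤ 0) : y t = y s + lam * (t - s) := by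
  have := hp.flat s t hs hst hneg
  linarith [hp.eqn s hs, hp.eqn t (hs.trans hst)]

theorem neg_le (hp : IsPathwiseSolution lam y f) (hlam : lam ≤ 0) (h0 : 0 ≤ y 0) (ht : 0 ≤ t) :
    -y 0 ≤ f t := by
  have hyt := hp.eqn t ht
  rcases le_or_gt 0 (y t) with hpos | hneg
  · nlinarith
  obtain ⟨c, hc, hyc, hle⟩ :=
    intermediate_value_Icc'_last ht hp.cont.continuousOn h0 hneg.le
  have hfc := hp.eqn c hc.1
  rw [hp.flat c t hc.1 hc.2 hle]
  nlinarith [hc.1]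

theorem eq_add_mul_of_neg (hp : IsPathwiseSolution lam y f) (hlam : lam ≤ 0) (hs : 0 ≤ s)
    (hys : y s < 0) (hst : s ≤ t) : y t = y s + lam * (t - s) := by
  have hneg : ∀ u, s ≤ u → y u < 0 := by
    intro u hsu
    by_contra! hyu
    obtain ⟨c, hc, hyc, hle⟩ :=
      intermediate_value_Icc_first hsu hp.cont.continuousOn hys.le hyu
    have := hp.eq_add_mul_of_nonpos_on hs hc.1 hle
    nlinarith [hc.1]
  exact hp.eq_add_mul_of_nonpos_on hs hst fun u hu => (hneg u hu.1).le

end IsPathwiseSolution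

theorem MeasureTheory.Martingale.mul_measureReal_inter_le {Ω : Type*} [m : MeasurableSpace Ω]
    {P : Measure Ω} [IsFiniteMeasure P] {ℱ : Filtration ℝ m} {M : ℝ → Ω → ℝ} (hM : Martingale M ℱ P)
    (hM0 : ∀ᵐ ω ∂P, M 0 ω = 0) {E : Set Ω} (hE : MeasurableSet[ℱ 0] E) {t K : ℝ} (ht : 0 ≤ t)
    (hK : ∀ᵐ ω ∂P, ω ∈ E → -K ≤ M t ω) (c : ℝ) :
    (c + K) * P.real (E ∩ {ω | c ≤ M t ω}) ≤ K * P.real E := by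
  have hEm : MeasurableSet E := ℱ.le 0 _ hE
  have hint : ∫ ω in E, (M t ω + K) ∂P = K * P.real E := by
    rw [integral_add (hM.integrable t).integrableOn (integrable_const K),
      ← hM.setIntegral_eq ht hE, setIntegral_congr_ae hEm (hM0.mono fun ω h _ => h)]
    simp [mul_comm]
  have hnonneg : 0 ≤ᵐ[P.restrict E] fun ω => M t ω + K := by
    filter_upwards [(ae_restrict_iff' hEm).2 hK] with ω h
    simp only [Pi.zero_apply]
    linarith
  have := mul_meas_ge_le_integral_of_nonneg hnonneg
    ((hM.integrable t).integrableOn.add (integrable_const K)) (c + K)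
  simpa [measureReal_restrict_apply' hEm, hint, inter_comm] using this

namespace WeakSolution

variable {Ω : Type*} [m : MeasurableSpace Ω] {P : Measure Ω} {ℱ : Filtration ℝ m} {lam : ℝ}
  {B : ℝ → Ω → ℝ} {ξ : Ω → ℝ} {Y : ℝ → Ω → ℝ} {M : ℝ → Ω → ℝ}

theorem ae_isPathwiseSolution (hsol : WeakSolution P ℱ lam B ξ Y M) :
    ∀ᵐ ω ∂P, IsPathwiseSolution lam (Y · ω) (M · ω) := by
  filter_upwards [hsol.contY, hsol.init, hsol.eqn, hsol.integral.flat] with ω hc hi he hf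
  exact ⟨hc, fun t ht => hi ▸ he t ht, hf⟩

theorem ae_exists_nat_lt [IsFiniteMeasure P] (hsol : WeakSolution P ℱ lam B ξ Y M)
    (hlam : lam < 0) (hξ : ∀ᵐ ω ∂P, 0 ≤ ξ ω) (a : ℝ) : ∀ᵐ ω ∂P, ∃ n : ℕ, Y n ω < a := by
  have hgood : ∀ᵐ ω ∂P, IsPathwiseSolution lam (Y · ω) (M · ω) ∧ 0 ≤ Y 0 ω := by
    filter_upwards [hsol.ae_isPathwiseSolution, hsol.init, hξ] with ω hp hi hξω
    exact ⟨hp, hi ▸ hξω⟩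
  have hnull : ∀ K : ℕ, P ({ω | Y 0 ω ≤ K} ∩ {ω | ∀ n : ℕ, a ≤ Y n ω}) = 0 := by
    intro K
    set E := {ω | Y 0 ω ≤ K}
    set N := {ω | ∀ n : ℕ, a ≤ Y n ω}
    have hE : MeasurableSet[ℱ 0] E := hsol.adaptedY 0 measurableSet_Iic
    by_contra hne
    have hp : 0 < P.real (E ∩ N) := ENNReal.toReal_pos hne (measure_ne_top P _)
    have hmono : ∀ n : ℕ, P.real (E ∩ N) ≤ P.real (E ∩ {ω | a - K - lam * n ≤ M n ω}) := by
      intro n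
      refine ENNReal.toReal_mono (measure_ne_top P _) (measure_mono_ae ?_)
      filter_upwards [hgood] with ω hω hωEN
      obtain ⟨hωE, hωN⟩ := hωEN
      have hY0 : Y 0 ω ≤ K := hωE
      have hYn : a ≤ Y n ω := hωN n
      have heqn : Y n ω = Y 0 ω + lam * n + M n ω := hω.1.eqn n n.cast_nonneg
      exact ⟨hωE, show a - K - lam * n ≤ M n ω by linarith⟩
    have hbdd : ∀ t, 0 ≤ t → ∀ᵐ ω ∂P, ω ∈ E → -(K : ℝ) ≤ M t ω := by
      intro t ht
      filter_upwards [hgood] with ω hω hωE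
      linarith [hω.1.neg_le hlam.le hω.2 ht, show Y 0 ω ≤ K from hωE]
    obtain ⟨n, hn⟩ := exists_nat_gt ((K * P.real univ / P.real (E ∩ N) - a) / -lam)
    have hgrowth : K * P.real univ < (a - lam * n) * P.real (E ∩ N) := by
      rw [div_lt_iff₀ (neg_pos.2 hlam), sub_lt_iff_lt_add, div_lt_iff₀ hp] at hn
      linarith
    have hmart := hsol.integral.mart.mul_measureReal_inter_le hsol.integral.init hE
      n.cast_nonneg (hbdd n n.cast_nonneg) (a - K - lam * n)
    have hrate : 0 < a - lam * n := pos_of_mul_pos_left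
      ((mul_nonneg K.cast_nonneg measureReal_nonneg).trans_lt hgrowth) hp.le
    have hEuniv : P.real E ≤ P.real univ := measureReal_mono (subset_univ E)
    linarith [mul_le_mul_of_nonneg_left (hmono n) hrate.le,
      mul_le_mul_of_nonneg_left hEuniv K.cast_nonneg]
  filter_upwards [ae_all_iff.2 fun K => (measure_eq_zero_iff_ae_notMem.1 (hnull K))] with ω hω
  obtain ⟨K, hK⟩ := exists_nat_ge (Y 0 ω)
  simpa [hK] using hω K

end WeakSolution

/-- for λ < 0 and a weak solution `Y` of `Y = ξ + λt + ∫ 1_{Y>0} dB` with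
`ξ > 0` a.s., once `Y` hits level `-ε` (at time `σ_{-ε} = inf{t ≥ 0 : Y(t) ≤ -ε}`) it
moves deterministically: `Y(σ_{-ε} ∨ t) = Y(σ_{-ε}) + λ((σ_{-ε} ∨ t) - σ_{-ε})`
for all `t ≥ 0`, almost surely. -/
theorem stmt19 {Ω : Type*} [m : MeasurableSpace Ω] (P : Measure Ω) [IsProbabilityMeasure P]
    (ℱ : Filtration ℝ m) (lam : ℝ) (hlam : lam < 0)
    (B : ℝ → Ω → ℝ) (ξ : Ω → ℝ) (Y : ℝ → Ω → ℝ) (M : ℝ → Ω → ℝ)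
    (hsol : WeakSolution P ℱ lam B ξ Y M)
    (hξ : ∀ᵐ ω ∂P, 0 < ξ ω)
    (σe : ℝ → Ω → ℝ)
    (hσe : ∀ (ε : ℝ) (ω : Ω), σe ε ω = sInf {t : ℝ | 0 ≤ t ∧ Y t ω ≤ -ε}) :
    ∀ ε : ℝ, 0 < ε →
      ∀ᵐ ω ∂P, ∀ t : ℝ, 0 ≤ t →
        Y (max (σe ε ω) t) ω
          = Y (σe ε ω) ω + lam * (max (σe ε ω) t - σe ε ω) := by
  intro ε hε
  filter_upwards [hsol.ae_isPathwiseSolution,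
    hsol.ae_exists_nat_lt hlam (hξ.mono fun _ h => h.le) (-ε)] with ω hp hhit t _
  obtain ⟨n, hn⟩ := hhit
  have hclosed : IsClosed {t : ℝ | 0 ≤ t ∧ Y t ω ≤ -ε} :=
    isClosed_Ici.inter (isClosed_le hp.cont continuous_const)
  have hσ : σe ε ω ∈ {t : ℝ | 0 ≤ t ∧ Y t ω ≤ -ε} :=
    hσe ε ω ▸ hclosed.csInf_mem ⟨n, n.cast_nonneg, hn.le⟩ ⟨0, fun _ h => h.1⟩
  exact hp.eq_add_mul_of_neg hlam.le hσ.1 (hσ.2.trans_lt (neg_lt_zero.2 hε)) (le_max_left _ _)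
end
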